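/- Assume the pair (A,B) is exponentially stabilizable and (A,C) is exponentially detectable (finite-dimensional setting: there exist K, L with A+BK and A+LC Hurwitz). Then there exists a constant c > 0, independent of T, such that for every T > 0 and every solution (y, λ) of the coupled Hamiltonian system ẏ = Ay + BQ⁻¹B*λ, λ̇ = C*Cy - A*λ on [0,T], one has ‖y(T)‖ + ‖λ(0)‖ ≤ c (‖y(0)‖ + ‖λ(T)‖). -/

import Mathlib

/-!
Write `u = Q⁻¹B*λ` for the control. Along a solution the pairing `⟪λ, y⟫` has derivative
`‖Cy‖² + ⟪Qu, u⟫ ≥ 0`, so with `a = ‖y T‖ + ‖λ 0‖` and `b = ‖y 0‖ + ‖λ T‖` the energy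
`∫₀ᵀ ‖Cy‖² + ⟪Qu, u⟫` is at most `a b`. The state equation is exponentially stable once rewritten
with the output injection `L`, and so is the time-reversed costate equation with the feedback `K`;
in both cases the forcing term is bounded by `‖u‖ + ‖Cy‖`. Duhamel's formula and Young's
inequality against the exponential weight then give `a ≤ p b + δ r a b + q / δ` for every `δ > 0`,
with `p, q, r` independent of `T`, and `δ ~ 1 / b` yields `a ≤ c b`.
-/

open scoped RealInnerProductSpace
open ContinuousLinearMap NormedSpace Set intervalIntegral

theorem integral_exp_neg_mul_sub_le {ν T : ℝ} (hν : 0 < ν) :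
    ∫ s in 0..T, Real.exp (-ν * (T - s)) ≤ 1 / ν := by
  have hderiv :
      ∀ s, HasDerivAt (fun s => Real.exp (-ν * (T - s)) / ν) (Real.exp (-ν * (T - s))) s :=
    fun s => ((((hasDerivAt_id s).const_sub T).const_mul (-ν)).exp.div_const ν).congr_deriv
      (by field_simp; simp)
  rw [integral_eq_sub_of_hasDerivAt (fun s _ => hderiv s)
    (Continuous.intervalIntegrable (by fun_prop) _ _)]
  have := div_pos (Real.exp_pos (-ν * (T - 0))) hν
  simp only [sub_self, mul_zero, Real.exp_zero] at this ⊢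
  linarith

theorem integral_exp_mul_le_integral_sq {ν δ T : ℝ} {φ : ℝ → ℝ} (hν : 0 < ν) (hδ : 0 < δ)
    (hT : 0 ≤ T) (hφ : ContinuousOn φ (Icc 0 T)) :
    ∫ s in 0..T, Real.exp (-ν * (T - s)) * φ s ≤ δ * (∫ s in 0..T, φ s ^ 2) + 1 / (8 * ν * δ) := by
  have young : ∀ a b : ℝ, a * b ≤ δ * b ^ 2 + 1 / (4 * δ) * a ^ 2 := fun a b => by
    field_simp
    nlinarith [sq_nonneg (2 * δ * b - a)]
  have hsq : ∀ s, Real.exp (-(2 * ν) * (T - s)) = Real.exp (-ν * (T - s)) ^ 2 := fun s => by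
    rw [← Real.exp_nat_mul]; ring_nf
  have hweight := integral_exp_neg_mul_sub_le (T := T) (mul_pos two_pos hν)
  have hφsq : IntervalIntegrable (fun s => δ * φ s ^ 2) MeasureTheory.volume 0 T :=
    (continuousOn_const.mul (hφ.pow 2)).intervalIntegrable_of_Icc hT
  have hexp : IntervalIntegrable (fun s => 1 / (4 * δ) * Real.exp (-(2 * ν) * (T - s)))
      MeasureTheory.volume 0 T := Continuous.intervalIntegrable (by fun_prop) _ _
  calc ∫ s in 0..T, Real.exp (-ν * (T - s)) * φ s
      ≤ ∫ s in 0..T, (δ * φ s ^ 2 + 1 / (4 * δ) * Real.exp (-(2 * ν) * (T - s))) :=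
        integral_mono_on hT ((ContinuousOn.mul (by fun_prop) hφ).intervalIntegrable_of_Icc hT)
          (hφsq.add hexp) (fun s _ => by rw [hsq]; exact young _ _)
    _ = δ * (∫ s in 0..T, φ s ^ 2) + 1 / (4 * δ) * ∫ s in 0..T, Real.exp (-(2 * ν) * (T - s)) := by
        rw [integral_add hφsq hexp, integral_const_mul, integral_const_mul]
    _ ≤ δ * (∫ s in 0..T, φ s ^ 2) + 1 / (4 * δ) * (1 / (2 * ν)) := by gcongr
    _ = δ * (∫ s in 0..T, φ s ^ 2) + 1 / (8 * ν * δ) := by field_simp; ring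

section Duhamel

variable {E : Type*} [NormedAddCommGroup E] [NormedSpace ℝ E] [CompleteSpace E]
  {M : E →L[ℝ] E} {T c ν δ : ℝ} {y f : ℝ → E}

theorem hasDerivAt_exp_sub_smul_apply {s : ℝ} (hy : HasDerivAt y (M (y s) + f s) s) :
    HasDerivAt (fun s => exp ((T - s) • M) (y s)) (exp ((T - s) • M) (f s)) s := by
  have hexp : HasDerivAt (fun s : ℝ => exp ((T - s) • M)) (-(exp ((T - s) • M) * M)) s :=
    ((hasDerivAt_exp_smul_const M (T - s)).scomp s ((hasDerivAt_id s).const_sub T)).congr_deriv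
      (by simp)
  convert hexp.clm_apply hy using 1
  simp [map_add]

theorem eq_exp_smul_add_integral (hT : 0 ≤ T) (hf : ContinuousOn f (Icc 0 T))
    (hy : ∀ t ∈ Icc 0 T, HasDerivAt y (M (y t) + f t) t) :
    y T = exp (T • M) (y 0) + ∫ s in 0..T, exp ((T - s) • M) (f s) := by
  have hcont : ContinuousOn (fun s => exp ((T - s) • M) (f s)) (Icc 0 T) :=
    ((differentiable_exp_smul_const (𝕂 := ℝ) M).continuous.comp
      (continuous_sub_left T)).continuousOn.clm_apply hf
  rw [integral_eq_sub_of_hasDerivAt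
    (fun t ht => hasDerivAt_exp_sub_smul_apply (hy t (by rwa [uIcc_of_le hT] at ht)))
    (hcont.intervalIntegrable_of_Icc hT)]
  simp

theorem norm_le_of_exp_bound (hT : 0 ≤ T)
    (hM : ∀ t, 0 ≤ t → ‖exp (t • M)‖ ≤ c * Real.exp (-ν * t)) (hf : ContinuousOn f (Icc 0 T))
    (hy : ∀ t ∈ Icc 0 T, HasDerivAt y (M (y t) + f t) t) :
    ‖y T‖ ≤ c * Real.exp (-ν * T) * ‖y 0‖ + ∫ s in 0..T, c * Real.exp (-ν * (T - s)) * ‖f s‖ := by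
  have hbound :
      ∀ s ∈ Ioc 0 T, ‖exp ((T - s) • M) (f s)‖ ≤ c * Real.exp (-ν * (T - s)) * ‖f s‖ :=
    fun s hs => (exp ((T - s) • M)).le_of_opNorm_le (hM _ (sub_nonneg.2 hs.2)) _
  rw [eq_exp_smul_add_integral hT hf hy]
  refine (norm_add_le _ _).trans (add_le_add ((exp (T • M)).le_of_opNorm_le (hM T hT) _) ?_)
  refine norm_integral_le_of_norm_le hT (MeasureTheory.ae_of_all _ hbound) ?_
  exact (ContinuousOn.mul (by fun_prop) hf.norm).intervalIntegrable_of_Icc hT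

theorem norm_le_of_exp_bound_integral_sq (hc : 0 ≤ c) (hν : 0 < ν) (hδ : 0 < δ) (hT : 0 ≤ T)
    (hM : ∀ t, 0 ≤ t → ‖exp (t • M)‖ ≤ c * Real.exp (-ν * t)) (hf : ContinuousOn f (Icc 0 T))
    (hy : ∀ t ∈ Icc 0 T, HasDerivAt y (M (y t) + f t) t) :
    ‖y T‖ ≤ c * ‖y 0‖ + c * (δ * (∫ s in 0..T, ‖f s‖ ^ 2) + 1 / (8 * ν * δ)) := by
  have hdecay : c * Real.exp (-ν * T) ≤ c :=
    mul_le_of_le_one_right hc (Real.exp_le_one_iff.2 (by nlinarith))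
  calc ‖y T‖
      ≤ c * Real.exp (-ν * T) * ‖y 0‖ + ∫ s in 0..T, c * Real.exp (-ν * (T - s)) * ‖f s‖ :=
        norm_le_of_exp_bound hT hM hf hy
    _ = c * Real.exp (-ν * T) * ‖y 0‖ + c * ∫ s in 0..T, Real.exp (-ν * (T - s)) * ‖f s‖ := by
        simp only [mul_assoc, integral_const_mul]
    _ ≤ _ := add_le_add (mul_le_mul_of_nonneg_right hdecay (norm_nonneg _))
        (mul_le_mul_of_nonneg_left (integral_exp_mul_le_integral_sq hν hδ hT hf.norm) hc)

theorem norm_le_of_exp_bound_integral_sq_rev (hc : 0 ≤ c) (hν : 0 < ν) (hδ : 0 < δ) (hT : 0 ≤ T)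
    (hM : ∀ t, 0 ≤ t → ‖exp (t • M)‖ ≤ c * Real.exp (-ν * t)) (hf : ContinuousOn f (Icc 0 T))
    (hy : ∀ t ∈ Icc 0 T, HasDerivAt y (f t - M (y t)) t) :
    ‖y 0‖ ≤ c * ‖y T‖ + c * (δ * (∫ s in 0..T, ‖f s‖ ^ 2) + 1 / (8 * ν * δ)) := by
  have hmaps : MapsTo (T - ·) (Icc 0 T) (Icc 0 T) := fun s hs =>
    ⟨by linarith [hs.2], by linarith [hs.1]⟩
  have hrev := norm_le_of_exp_bound_integral_sq
    (y := fun s => y (T - s)) (f := fun s => -f (T - s)) hc hν hδ hT hM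
    (hf.comp (continuous_sub_left T).continuousOn hmaps).neg fun s hs =>
      ((hy (T - s) (hmaps hs)).scomp s ((hasDerivAt_id s).const_sub T)).congr_deriv
        (by simp [sub_eq_add_neg, add_comm])
  simpa [integral_comp_sub_left fun s => ‖f s‖ ^ 2] using hrev

end Duhamel

theorem exists_pos_mul_norm_sq_le_inner {U : Type*} [NormedAddCommGroup U] [InnerProductSpace ℝ U]
    [FiniteDimensional ℝ U] {Q : U →L[ℝ] U} (hQ : ∀ u, u ≠ 0 → 0 < ⟪Q u, u⟫) :
    ∃ α, 0 < α ∧ ∀ u, α * ‖u‖ ^ 2 ≤ ⟪Q u, u⟫ := by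
  rcases subsingleton_or_nontrivial U with hU | hU
  · exact ⟨1, one_pos, fun u => by simp [Subsingleton.elim u 0]⟩
  obtain ⟨v, hv, hmin⟩ := (isCompact_sphere (0 : U) 1).exists_isMinOn
    (NormedSpace.sphere_nonempty.2 zero_le_one)
    (Q.continuous.inner (𝕜 := ℝ) continuous_id).continuousOn
  refine ⟨⟪Q v, v⟫, hQ v (ne_zero_of_mem_unit_sphere ⟨v, hv⟩), fun u => ?_⟩
  rcases eq_or_ne u 0 with rfl | hu
  · simp
  have hnorm : 0 < ‖u‖ := norm_pos_iff.2 hu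
  have hsphere : ‖u‖⁻¹ • u ∈ Metric.sphere (0 : U) 1 := by
    simp [norm_smul, hnorm.ne']
  have h := hmin hsphere
  simp only [mem_ofPred_eq, id, map_smul, real_inner_smul_left, real_inner_smul_right] at h
  calc ⟪Q v, v⟫ * ‖u‖ ^ 2 ≤ ‖u‖⁻¹ * (‖u‖⁻¹ * ⟪Q u, u⟫) * ‖u‖ ^ 2 := by gcongr
    _ = ⟪Q u, u⟫ := by field_simp

theorem norm_exp_smul_adjoint {X : Type*} [NormedAddCommGroup X] [InnerProductSpace ℝ X]
    [CompleteSpace X] (S : X →L[ℝ] X) (t : ℝ) :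
    ‖exp (t • adjoint S)‖ = ‖exp (t • S)‖ := by
  rw [show t • adjoint S = star (t • S) by rw [star_smul, star_trivial, star_eq_adjoint],
    ← star_exp, norm_star]

structure IsHamiltonianSolution {X U V : Type*}
    [NormedAddCommGroup X] [InnerProductSpace ℝ X] [CompleteSpace X]
    [NormedAddCommGroup U] [InnerProductSpace ℝ U] [CompleteSpace U]
    [NormedAddCommGroup V] [InnerProductSpace ℝ V] [CompleteSpace V]
    (A : X →L[ℝ] X) (B : U →L[ℝ] X) (C : X →L[ℝ] V) (Q : U →L[ℝ] U) (T : ℝ)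
    (y lam : ℝ → X) (u : ℝ → U) : Prop where
  hasDerivAt_state : ∀ t ∈ Icc 0 T, HasDerivAt y (A (y t) + B (u t)) t
  hasDerivAt_costate : ∀ t ∈ Icc 0 T, HasDerivAt lam (adjoint C (C (y t)) - adjoint A (lam t)) t
  adjoint_costate : ∀ t ∈ Icc 0 T, adjoint B (lam t) = Q (u t)
  continuousOn_control : ContinuousOn u (Icc 0 T)

namespace IsHamiltonianSolution

variable {X U V : Type*}
  [NormedAddCommGroup X] [InnerProductSpace ℝ X] [CompleteSpace X]
  [NormedAddCommGroup U] [InnerProductSpace ℝ U] [CompleteSpace U]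
  [NormedAddCommGroup V] [InnerProductSpace ℝ V] [CompleteSpace V]
  {A : X →L[ℝ] X} {B : U →L[ℝ] X} {C : X →L[ℝ] V} {Q : U →L[ℝ] U} {T α : ℝ}
  {y lam : ℝ → X} {u : ℝ → U}

theorem continuousOn_state (h : IsHamiltonianSolution A B C Q T y lam u) :
    ContinuousOn y (Icc 0 T) :=
  fun t ht => (h.hasDerivAt_state t ht).continuousAt.continuousWithinAt

theorem hasDerivAt_inner (h : IsHamiltonianSolution A B C Q T y lam u) {t : ℝ}
    (ht : t ∈ Icc 0 T) :
    HasDerivAt (fun t => ⟪lam t, y t⟫) (‖C (y t)‖ ^ 2 + ⟪Q (u t), u t⟫) t := by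
  refine ((h.hasDerivAt_costate t ht).inner ℝ (h.hasDerivAt_state t ht)).congr_deriv ?_
  rw [inner_add_right, inner_sub_left, ← h.adjoint_costate t ht, adjoint_inner_left,
    adjoint_inner_left, adjoint_inner_left, real_inner_self_eq_norm_sq, real_inner_comm]
  ring

theorem continuousOn_energy (h : IsHamiltonianSolution A B C Q T y lam u) :
    ContinuousOn (fun t => ‖C (y t)‖ ^ 2 + ⟪Q (u t), u t⟫) (Icc 0 T) :=
  ((C.continuous.comp_continuousOn h.continuousOn_state).norm.pow 2).add
    ((Q.continuous.comp_continuousOn h.continuousOn_control).inner h.continuousOn_control)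

theorem integral_energy_le (h : IsHamiltonianSolution A B C Q T y lam u) (hT : 0 ≤ T) :
    ∫ t in 0..T, (‖C (y t)‖ ^ 2 + ⟪Q (u t), u t⟫) ≤ (‖y T‖ + ‖lam 0‖) * (‖y 0‖ + ‖lam T‖) := by
  rw [integral_eq_sub_of_hasDerivAt
    (fun t ht => h.hasDerivAt_inner (by rwa [uIcc_of_le hT] at ht))
    (h.continuousOn_energy.intervalIntegrable_of_Icc hT)]
  have h₁ := real_inner_le_norm (lam T) (y T)
  have h₀ := neg_le_of_abs_le (abs_real_inner_le_norm (lam 0) (y 0))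
  nlinarith [norm_nonneg (y 0), norm_nonneg (y T), norm_nonneg (lam 0), norm_nonneg (lam T)]

theorem integral_norm_sq_le (h : IsHamiltonianSolution A B C Q T y lam u) (hT : 0 ≤ T)
    (hα : 0 < α) (hQ : ∀ v, α * ‖v‖ ^ 2 ≤ ⟪Q v, v⟫) {f : ℝ → X} {a b : ℝ}
    (hf : ContinuousOn f (Icc 0 T)) (hfb : ∀ t ∈ Icc 0 T, ‖f t‖ ≤ a * ‖u t‖ + b * ‖C (y t)‖) :
    ∫ t in 0..T, ‖f t‖ ^ 2 ≤
      2 * (a ^ 2 / α + b ^ 2) * ((‖y T‖ + ‖lam 0‖) * (‖y 0‖ + ‖lam T‖)) := by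
  have hpoint : ∀ t ∈ Icc 0 T,
      ‖f t‖ ^ 2 ≤ 2 * (a ^ 2 / α + b ^ 2) * (‖C (y t)‖ ^ 2 + ⟪Q (u t), u t⟫) := fun t ht => by
    have hu : a ^ 2 * ‖u t‖ ^ 2 ≤ a ^ 2 / α * ⟪Q (u t), u t⟫ := by
      rw [div_mul_eq_mul_div, le_div_iff₀ hα]; nlinarith [hQ (u t), sq_nonneg a]
    have hq : 0 ≤ ⟪Q (u t), u t⟫ := le_trans (by positivity) (hQ (u t))
    calc ‖f t‖ ^ 2 ≤ (a * ‖u t‖ + b * ‖C (y t)‖) ^ 2 := by gcongr; exact hfb t ht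
      _ ≤ 2 * ((a * ‖u t‖) ^ 2 + (b * ‖C (y t)‖) ^ 2) := add_sq_le
      _ ≤ _ := by nlinarith [mul_nonneg (sq_nonneg b) hq,
          mul_nonneg (div_nonneg (sq_nonneg a) hα.le) (sq_nonneg ‖C (y t)‖)]
  calc ∫ t in 0..T, ‖f t‖ ^ 2
      ≤ ∫ t in 0..T, 2 * (a ^ 2 / α + b ^ 2) * (‖C (y t)‖ ^ 2 + ⟪Q (u t), u t⟫) :=
        integral_mono_on hT ((hf.norm.pow 2).intervalIntegrable_of_Icc hT)
          ((continuousOn_const.mul h.continuousOn_energy).intervalIntegrable_of_Icc hT) hpoint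
    _ ≤ _ := by
        rw [integral_const_mul]
        exact mul_le_mul_of_nonneg_left (h.integral_energy_le hT) (by positivity)

theorem norm_add_norm_le (h : IsHamiltonianSolution A B C Q T y lam u) (hT : 0 ≤ T)
    (hα : 0 < α) (hQ : ∀ v, α * ‖v‖ ^ 2 ≤ ⟪Q v, v⟫) {K : X →L[ℝ] U} {L : V →L[ℝ] X}
    {c₁ ν₁ c₂ ν₂ δ : ℝ} (hc₁ : 0 ≤ c₁) (hν₁ : 0 < ν₁) (hc₂ : 0 ≤ c₂) (hν₂ : 0 < ν₂)
    (hK : ∀ t, 0 ≤ t → ‖exp (t • (A + B ∘L K))‖ ≤ c₁ * Real.exp (-ν₁ * t))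
    (hL : ∀ t, 0 ≤ t → ‖exp (t • (A + L ∘L C))‖ ≤ c₂ * Real.exp (-ν₂ * t)) (hδ : 0 < δ) :
    ‖y T‖ + ‖lam 0‖ ≤ (c₂ + c₁) * (‖y 0‖ + ‖lam T‖)
      + δ * (c₂ * (2 * (‖B‖ ^ 2 / α + ‖L‖ ^ 2))
          + c₁ * (2 * (‖adjoint K ∘L Q‖ ^ 2 / α + ‖adjoint C‖ ^ 2)))
        * ((‖y T‖ + ‖lam 0‖) * (‖y 0‖ + ‖lam T‖))
      + (c₂ / (8 * ν₂) + c₁ / (8 * ν₁)) / δ := by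
  have hu := h.continuousOn_control
  have hCy := C.continuous.comp_continuousOn h.continuousOn_state
  have hf₁ : ContinuousOn (fun t => B (u t) - L (C (y t))) (Icc 0 T) :=
    (B.continuous.comp_continuousOn hu).sub (L.continuous.comp_continuousOn hCy)
  have hf₂ : ContinuousOn (fun t => (adjoint K ∘L Q) (u t) + adjoint C (C (y t))) (Icc 0 T) :=
    ((adjoint K ∘L Q).continuous.comp_continuousOn hu).add
      ((adjoint C).continuous.comp_continuousOn hCy)
  -- `y' = (A + LC) y + (Bu - LCy)` and `λ' = (K*Qu + C*Cy) - (A + BK)* λ`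
  have hstate := norm_le_of_exp_bound_integral_sq hc₂ hν₂ hδ hT hL hf₁
    fun t ht => (h.hasDerivAt_state t ht).congr_deriv (by simp)
  have hcostate := norm_le_of_exp_bound_integral_sq_rev hc₁ hν₁ hδ hT
    (fun t ht => (norm_exp_smul_adjoint _ t).trans_le (hK t ht)) hf₂
    fun t ht => (h.hasDerivAt_costate t ht).congr_deriv
      (by simp [← h.adjoint_costate t ht]; abel)
  have hI₁ := h.integral_norm_sq_le hT hα hQ hf₁
    fun t _ => (norm_sub_le _ _).trans (add_le_add (B.le_opNorm _) (L.le_opNorm _))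
  have hI₂ := h.integral_norm_sq_le hT hα hQ hf₂
    fun t _ => (norm_add_le _ _).trans (add_le_add (le_opNorm _ _) (le_opNorm _ _))
  linear_combination hstate + hcostate + (c₂ * δ) * hI₁ + (c₁ * δ) * hI₂
    + mul_nonneg hc₂ (norm_nonneg (lam T)) + mul_nonneg hc₁ (norm_nonneg (y 0))

end IsHamiltonianSolution

theorem le_mul_of_forall_le_add_div {a b p q r : ℝ} (ha : 0 ≤ a) (hb : 0 ≤ b) (hr : 0 ≤ r)
    (h : ∀ δ > 0, a ≤ p * b + δ * r * (a * b) + q / δ) : a ≤ (2 * p + 4 * (r + 1) * q) * b := by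
  rcases hb.eq_or_lt with rfl | hb
  · simp only [mul_zero, zero_add, add_zero] at h ⊢
    by_contra! ha'
    have := h ((|q| + 1) / a) (by positivity)
    rw [div_div_eq_mul_div, le_div_iff₀ (by positivity)] at this
    nlinarith [le_abs_self q]
  · have hδ := h (1 / (2 * (r + 1) * b)) (by positivity)
    have hra : r / (r + 1) * a ≤ a :=
      mul_le_of_le_one_left ha ((div_le_one₀ (by linarith)).2 (by linarith))
    have e₁ : 1 / (2 * (r + 1) * b) * r * (a * b) = r / (r + 1) * a / 2 := by field_simp
    have e₂ : q / (1 / (2 * (r + 1) * b)) = 2 * (r + 1) * q * b := by field_simp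
    rw [e₁, e₂] at hδ
    linarith

theorem stmt8_general
    {X U V : Type*}
    [NormedAddCommGroup X] [InnerProductSpace ℝ X] [FiniteDimensional ℝ X]
    [NormedAddCommGroup U] [InnerProductSpace ℝ U] [FiniteDimensional ℝ U]
    [NormedAddCommGroup V] [InnerProductSpace ℝ V] [FiniteDimensional ℝ V]
    (A : X →L[ℝ] X) (B : U →L[ℝ] X) (C : X →L[ℝ] V) (Q Qinv : U →L[ℝ] U)
    (hQpos : ∀ u : U, u ≠ 0 → 0 < ⟪Q u, u⟫)
    (hQ1 : Q ∘L Qinv = 1)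
    -- (A,B) exponentially stabilizable: A + BK is Hurwitz for some K
    (hstab : ∃ (K : X →L[ℝ] U) (c ν : ℝ), 0 < c ∧ 0 < ν ∧
      ∀ t : ℝ, 0 ≤ t → ‖NormedSpace.exp (t • (A + B ∘L K))‖ ≤ c * Real.exp (-ν * t))
    -- (A,C) exponentially detectable: A + LC is Hurwitz for some L
    (hdet : ∃ (L : V →L[ℝ] X) (c ν : ℝ), 0 < c ∧ 0 < ν ∧
      ∀ t : ℝ, 0 ≤ t → ‖NormedSpace.exp (t • (A + L ∘L C))‖ ≤ c * Real.exp (-ν * t)) :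
    ∃ c : ℝ, 0 < c ∧ ∀ T : ℝ, 0 < T → ∀ y lam : ℝ → X,
      (∀ t ∈ Set.Icc (0 : ℝ) T,
        HasDerivAt y (A (y t) + (B ∘L Qinv ∘L ContinuousLinearMap.adjoint B) (lam t)) t) →
      (∀ t ∈ Set.Icc (0 : ℝ) T,
        HasDerivAt lam ((ContinuousLinearMap.adjoint C ∘L C) (y t)
          - ContinuousLinearMap.adjoint A (lam t)) t) →
      ‖y T‖ + ‖lam 0‖ ≤ c * (‖y 0‖ + ‖lam T‖) := by
  obtain ⟨K, c₁, ν₁, hc₁, hν₁, hK⟩ := hstab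
  obtain ⟨L, c₂, ν₂, hc₂, hν₂, hL⟩ := hdet
  obtain ⟨α, hα, hQα⟩ := exists_pos_mul_norm_sq_le_inner hQpos
  refine ⟨2 * (c₂ + c₁) + 4 * (c₂ * (2 * (‖B‖ ^ 2 / α + ‖L‖ ^ 2))
      + c₁ * (2 * (‖adjoint K ∘L Q‖ ^ 2 / α + ‖adjoint C‖ ^ 2)) + 1)
      * (c₂ / (8 * ν₂) + c₁ / (8 * ν₁)), by positivity, fun T hT y lam hy hlam => ?_⟩
  have hsol : IsHamiltonianSolution A B C Q T y lam fun t => Qinv (adjoint B (lam t)) :=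
    ⟨hy, hlam, fun t _ => by rw [← comp_apply Q Qinv, hQ1, one_apply_eq_self],
      (Qinv ∘L adjoint B).continuous.comp_continuousOn
        fun t ht => (hlam t ht).continuousAt.continuousWithinAt⟩
  exact le_mul_of_forall_le_add_div (by positivity) (by positivity) (by positivity)
    fun δ hδ => hsol.norm_add_norm_le hT.le hα hQα hc₁.le hν₁ hc₂.le hν₂ hK hL hδ

theorem stmt8
    {X U V : Type*}
    [NormedAddCommGroup X] [InnerProductSpace ℝ X] [FiniteDimensional ℝ X]
    [NormedAddCommGroup U] [InnerProductSpace ℝ U] [FiniteDimensional ℝ U]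
    [NormedAddCommGroup V] [InnerProductSpace ℝ V] [FiniteDimensional ℝ V]
    (A : X →L[ℝ] X) (B : U →L[ℝ] X) (C : X →L[ℝ] V) (Q Qinv : U →L[ℝ] U)
    (hQsa : ContinuousLinearMap.adjoint Q = Q)
    (hQpos : ∀ u : U, u ≠ 0 → 0 < ⟪Q u, u⟫)
    (hQ1 : Q ∘L Qinv = 1) (hQ2 : Qinv ∘L Q = 1)
    -- (A,B) exponentially stabilizable: A + BK is Hurwitz for some K
    (hstab : ∃ (K : X →L[ℝ] U) (c ν : ℝ), 0 < c ∧ 0 < ν ∧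
      ∀ t : ℝ, 0 ≤ t → ‖NormedSpace.exp (t • (A + B ∘L K))‖ ≤ c * Real.exp (-ν * t))
    -- (A,C) exponentially detectable: A + LC is Hurwitz for some L
    (hdet : ∃ (L : V →L[ℝ] X) (c ν : ℝ), 0 < c ∧ 0 < ν ∧
      ∀ t : ℝ, 0 ≤ t → ‖NormedSpace.exp (t • (A + L ∘L C))‖ ≤ c * Real.exp (-ν * t)) :
    ∃ c : ℝ, 0 < c ∧ ∀ T : ℝ, 0 < T → ∀ y lam : ℝ → X,
      (∀ t ∈ Set.Icc (0 : ℝ) T,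
        HasDerivAt y (A (y t) + (B ∘L Qinv ∘L ContinuousLinearMap.adjoint B) (lam t)) t) →
      (∀ t ∈ Set.Icc (0 : ℝ) T,
        HasDerivAt lam ((ContinuousLinearMap.adjoint C ∘L C) (y t)
          - ContinuousLinearMap.adjoint A (lam t)) t) →
      ‖y T‖ + ‖lam 0‖ ≤ c * (‖y 0‖ + ‖lam T‖) :=
  stmt8_general A B C Q Qinv hQpos hQ1 hstab hdet
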